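/- Let f, g be real analytic on 𝕋 with f and v = g/f nonconstant and Z(f) = {x ∈ 𝕋 : f(x) = 0} ≠ ∅. Then there is a constant c = c(f,g) > 0 such that mes{x ∈ 𝕋 : |g(x) − E·f(x)| < ε} < ε^{c} for all E ∈ ℝ and all sufficiently small ε > 0. -/

import Mathlib

open MeasureTheory Set

/-!
Write `g - E f = s (p₁ g - p₂ f)` with `s ≥ 1` and `p` on the unit sphere of `ℝ²` (sup norm).
Because `g / f` is nonconstant, no `p₁ g - p₂ f` vanishes identically, so by analyticity some
derivative of it is nonzero at every point. Compactness of `sphere × [0, 1]` and a Lebesgue number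
give `n`, `c > 0` and `δ > 0` such that on each interval of length `< δ` a single derivative of
order `k ≤ n` has modulus at least `c`, uniformly in `p`. The sublevel-set estimate
`|{|h| < ε}| ≤ 4 ^ (k + 1) (ε / c) ^ (1 / k)` for `|h⁽ᵏ⁾| ≥ c`, proved by induction on `k` from the
mean value theorem, then bounds `|{|g - E f| < ε}|` by `C ε ^ (1 / (n + 1))` uniformly in `E`.
-/

theorem mul_abs_sub_le_abs_sub_of_le_abs_deriv {F : ℝ → ℝ} (hF : Differentiable ℝ F)
    {s : Set ℝ} (hs : s.OrdConnected) {c : ℝ} (hder : ∀ x ∈ s, c ≤ |deriv F x|)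
    {u v : ℝ} (hu : u ∈ s) (hv : v ∈ s) : c * |u - v| ≤ |F u - F v| := by
  wlog huv : u < v generalizing u v
  · rcases (not_lt.mp huv).eq_or_lt with h | h
    · simp [h]
    · simpa only [abs_sub_comm] using this hv hu h
  obtain ⟨ξ, hξ, hslope⟩ := exists_deriv_eq_slope F huv hF.continuous.continuousOn
    hF.differentiableOn
  have hξs : ξ ∈ s := hs.out hu hv (Ioo_subset_Icc_self hξ)
  have hvu : v - u ≠ 0 := sub_ne_zero.mpr huv.ne'
  calc c * |u - v| ≤ |deriv F ξ| * |u - v| := by gcongr; exact hder ξ hξs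
    _ = |F u - F v| := by
      rw [abs_sub_comm u v, hslope, ← abs_mul, div_mul_cancel₀ _ hvu, abs_sub_comm]

theorem exists_sublevel_subset_Icc_of_le_abs_deriv {F : ℝ → ℝ} (hF : Differentiable ℝ F)
    {s : Set ℝ} (hs : s.OrdConnected) {c : ℝ} (hc : 0 < c) (hder : ∀ x ∈ s, c ≤ |deriv F x|)
    (t : ℝ) : ∃ u, {x ∈ s | |F x| < t} ⊆ Icc (u - 2 * t / c) (u + 2 * t / c) := by
  rcases eq_empty_or_nonempty {x ∈ s | |F x| < t} with hempty | ⟨u, hus, hu⟩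
  · exact ⟨0, hempty.subset.trans (empty_subset _)⟩
  refine ⟨u, fun x ⟨hxs, hx⟩ => ?_⟩
  have hdist : c * |x - u| < 2 * t := by
    calc c * |x - u| ≤ |F x - F u| := mul_abs_sub_le_abs_sub_of_le_abs_deriv hF hs hder hxs hus
      _ ≤ |F x| + |F u| := abs_sub _ _
      _ < 2 * t := by linarith
  have : |x - u| ≤ 2 * t / c := by rw [le_div_iff₀ hc]; linarith
  constructor <;> linarith [abs_le.mp this]

theorem volume_sublevel_le_add_of_le_abs_deriv {F h : ℝ → ℝ} (hF : Differentiable ℝ F)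
    {s : Set ℝ} (hs : s.OrdConnected) {c : ℝ} (hc : 0 < c) (hder : ∀ x ∈ s, c ≤ |deriv F x|)
    (t ε : ℝ) {B : ENNReal} (hB : ∀ s' ⊆ s, s'.OrdConnected → (∀ x ∈ s', t ≤ |F x|) →
      volume {x ∈ s' | |h x| < ε} ≤ B) :
    volume {x ∈ s | |h x| < ε} ≤ ENNReal.ofReal (4 * t / c) + 2 * B := by
  obtain ⟨u, hu⟩ := exists_sublevel_subset_Icc_of_le_abs_deriv hF hs hc hder t
  set d := 2 * t / c
  have hfar : ∀ x ∈ s, x ∉ Icc (u - d) (u + d) → t ≤ |F x| :=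
    fun x hx hxd => not_lt.mp fun hxt => hxd (hu ⟨hx, hxt⟩)
  have hleft := hB (s ∩ Iio (u - d)) inter_subset_left (hs.inter ordConnected_Iio)
    fun x hx => hfar x hx.1 fun hxd => (not_lt.mpr hxd.1) hx.2
  have hright := hB (s ∩ Ioi (u + d)) inter_subset_left (hs.inter ordConnected_Ioi)
    fun x hx => hfar x hx.1 fun hxd => (not_lt.mpr hxd.2) hx.2
  have hcover : {x ∈ s | |h x| < ε} ⊆ Icc (u - d) (u + d) ∪
      {x ∈ s ∩ Iio (u - d) | |h x| < ε} ∪ {x ∈ s ∩ Ioi (u + d) | |h x| < ε} := by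
    rintro x ⟨hxs, hx⟩
    rcases lt_or_ge x (u - d) with hxl | hxl
    · exact Or.inl (Or.inr ⟨⟨hxs, hxl⟩, hx⟩)
    rcases le_or_gt x (u + d) with hxr | hxr
    · exact Or.inl (Or.inl ⟨hxl, hxr⟩)
    · exact Or.inr ⟨⟨hxs, hxr⟩, hx⟩
  calc volume {x ∈ s | |h x| < ε}
      ≤ volume (Icc (u - d) (u + d)) + volume {x ∈ s ∩ Iio (u - d) | |h x| < ε}
        + volume {x ∈ s ∩ Ioi (u + d) | |h x| < ε} :=
        (measure_mono hcover).trans <|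
          (measure_union_le _ _).trans (add_le_add_left (measure_union_le _ _) _)
    _ ≤ ENNReal.ofReal (4 * t / c) + B + B := by
        rw [Real.volume_Icc]
        gcongr
        exact le_of_eq (by ring)
    _ = ENNReal.ofReal (4 * t / c) + 2 * B := by rw [add_assoc, two_mul]

theorem volume_sublevel_le_of_le_abs_iteratedDeriv (n : ℕ) {h : ℝ → ℝ}
    (hh : ContDiff ℝ (n + 1) h) {s : Set ℝ} (hs : s.OrdConnected) {c ε : ℝ} (hc : 0 < c)
    (hε : 0 < ε) (hder : ∀ x ∈ s, c ≤ |iteratedDeriv (n + 1) h x|) :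
    volume {x ∈ s | |h x| < ε} ≤ ENNReal.ofReal (4 ^ (n + 2) * (ε / c) ^ (1 / (n + 1 : ℝ))) := by
  induction n generalizing s c with
  | zero =>
    -- With `F = h` and `t = ε`, no point off the interval lies in the sublevel set.
    have hsplit := volume_sublevel_le_add_of_le_abs_deriv (h := h)
      (hh.differentiable one_ne_zero) hs hc (by simpa using hder) ε ε (B := 0)
      fun s' _ _ hs' => by
        have : {x ∈ s' | |h x| < ε} = ∅ :=
          eq_empty_iff_forall_notMem.mpr fun x hx => (hs' x hx.1).not_gt hx.2
        simp [this]
    rw [mul_zero, add_zero] at hsplit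
    refine hsplit.trans (ENNReal.ofReal_le_ofReal ?_)
    rw [mul_div_assoc]
    norm_num
    gcongr
    norm_num
  | succ n ih =>
    -- `t` is chosen so that both terms of `volume_sublevel_le_add_of_le_abs_deriv` are
    -- multiples of `r ^ e`.
    set r := ε / c with hr
    set e : ℝ := 1 / (n + 2) with he
    have hr0 : 0 < r := by positivity
    have hre : 0 < r ^ e := by positivity
    set t := c * r ^ e with ht
    have ht0 : 0 < t := by positivity
    have hexp : (ε / t) ^ (1 / (n + 1 : ℝ)) = r ^ e := by
      have : ε / t = r ^ (1 - e) := by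
        rw [Real.rpow_sub hr0, Real.rpow_one, ht, hr]; field_simp
      rw [this, ← Real.rpow_mul hr0.le, he]
      congr 1
      field_simp
      ring
    have hsplit := volume_sublevel_le_add_of_le_abs_deriv (h := h)
      (hh.differentiable_iteratedDeriv (n + 1) (by norm_cast; omega)) hs hc
      (fun x hx => by rw [← iteratedDeriv_succ]; exact hder x hx) t ε
      fun s' _ hs' hts' => ih (hh.of_le (by norm_cast; omega)) hs' ht0 hts'
    refine hsplit.trans ?_
    rw [show (1 / ((n + 1 : ℕ) + 1 : ℝ)) = e by rw [he]; push_cast; ring, hexp, two_mul,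
      ← ENNReal.ofReal_add (by positivity) (by positivity),
      ← ENNReal.ofReal_add (by positivity) (by positivity)]
    gcongr
    have h4 : (2 : ℝ) ≤ 4 ^ (n + 2) :=
      (by norm_num : (2 : ℝ) ≤ 4).trans (le_self_pow₀ (by norm_num) (by omega))
    rw [ht, mul_div_assoc, mul_div_cancel_left₀ _ hc.ne', pow_succ' 4 (n + 2)]
    nlinarith [mul_le_mul_of_nonneg_right h4 hre.le]

theorem volume_sublevel_le_of_le_abs_iteratedDeriv_of_le {k n : ℕ} (hkn : k ≤ n) {h : ℝ → ℝ}
    (hh : ContDiff ℝ k h) {s : Set ℝ} (hs : s.OrdConnected) {c ε : ℝ} (hc : 0 < c)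
    (hε : 0 < ε) (hεc : ε ≤ c) (hder : ∀ x ∈ s, c ≤ |iteratedDeriv k h x|) :
    volume {x ∈ s | |h x| < ε} ≤ ENNReal.ofReal (4 ^ (n + 2) * (ε / c) ^ (1 / (n + 1 : ℝ))) := by
  cases k with
  | zero =>
    have : {x ∈ s | |h x| < ε} = ∅ := eq_empty_iff_forall_notMem.mpr fun x ⟨hxs, hx⟩ =>
      (hder x hxs).not_gt (by simpa using hx.trans_le hεc)
    simp [this]
  | succ m =>
    refine (volume_sublevel_le_of_le_abs_iteratedDeriv m hh hs hc hε hder).trans ?_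
    have hr : ε / c ≤ 1 := div_le_one_of_le₀ hεc hc.le
    gcongr ENNReal.ofReal (4 ^ ?_ * ?_)
    · norm_num
    · omega
    · refine Real.rpow_le_rpow_of_exponent_ge (by positivity) hr ?_
      gcongr
      exact_mod_cast (by omega : m ≤ n)

theorem IsCompact.exists_forall_le_abs_of_forall_exists_ne_zero {X : Type*}
    [PseudoMetricSpace X] {K : Set X} (hK : IsCompact K) {F : ℕ → X → ℝ}
    (hF : ∀ k, Continuous (F k)) (hne : ∀ q ∈ K, ∃ k, F k q ≠ 0) :
    ∃ n : ℕ, ∃ c > 0, ∃ δ > 0, ∀ q ∈ K, ∃ k ≤ n, ∀ q' ∈ Metric.ball q δ, c ≤ |F k q'| := by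
  set V : ℕ × ℕ → Set X := fun i => {q | ((i.2 : ℝ) + 1)⁻¹ < |F i.1 q|}
  have hV : ∀ i, IsOpen (V i) := fun i => isOpen_lt continuous_const (hF i.1).abs
  have hcover : K ⊆ ⋃ i, V i := fun q hq => by
    obtain ⟨k, hk⟩ := hne q hq
    obtain ⟨m, hm⟩ := exists_nat_one_div_lt (abs_pos.mpr hk)
    exact mem_iUnion.mpr ⟨(k, m), by simpa [V, one_div] using hm⟩
  obtain ⟨t, ht⟩ := hK.elim_finite_subcover V hV hcover
  obtain ⟨δ, hδ, hball⟩ := lebesgue_number_lemma_of_metric hK (c := fun i : t => V i)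
    (fun i => hV i) (by simpa [iUnion_subtype] using ht)
  refine ⟨t.sup Prod.fst, ((t.sup Prod.snd : ℕ) + 1 : ℝ)⁻¹, by positivity, δ, hδ,
    fun q hq => ?_⟩
  obtain ⟨⟨⟨k, m⟩, hi⟩, hsub⟩ := hball q hq
  refine ⟨k, Finset.le_sup (f := Prod.fst) hi, fun q' hq' => ?_⟩
  calc ((t.sup Prod.snd : ℕ) + 1 : ℝ)⁻¹ ≤ ((m : ℝ) + 1)⁻¹ := by
        gcongr; exact_mod_cast Finset.le_sup (f := Prod.snd) hi
    _ ≤ |F k q'| := (hsub hq').le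

theorem AnalyticOnNhd.exists_iteratedDeriv_ne_zero {𝕜 E : Type*} [NontriviallyNormedField 𝕜]
    [CharZero 𝕜] [NormedAddCommGroup E] [NormedSpace 𝕜 E] [CompleteSpace E] {w : 𝕜 → E}
    {U : Set 𝕜} (hw : AnalyticOnNhd 𝕜 w U) (hU : IsPreconnected U) {x y : 𝕜} (hx : x ∈ U)
    (hy : y ∈ U) (hwy : w y ≠ 0) : ∃ k, iteratedDeriv k w x ≠ 0 := by
  by_contra! hder
  have htop : analyticOrderAt w x = ⊤ := ENat.eq_top_iff_forall_ge.mpr fun m =>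
    (natCast_le_analyticOrderAt_iff_iteratedDeriv_eq_zero (hw x hx)).mpr fun i _ => hder i
  exact hwy (hw.eqOn_zero_of_preconnected_of_eventuallyEq_zero hU hx
    (analyticOrderAt_eq_top.mp htop) hy)

theorem iteratedDeriv_const_mul_sub_const_mul {𝕜 : Type*} [NontriviallyNormedField 𝕜]
    {k : ℕ} {f g : 𝕜 → 𝕜} (hf : ContDiff 𝕜 k f) (hg : ContDiff 𝕜 k g) (a b x : 𝕜) :
    iteratedDeriv k (fun t => a * g t - b * f t) x =
      a * iteratedDeriv k g x - b * iteratedDeriv k f x := by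
  rw [iteratedDeriv_fun_sub (contDiff_const.mul hg).contDiffAt
    (contDiff_const.mul hf).contDiffAt,
    iteratedDeriv_const_mul_field, iteratedDeriv_const_mul_field]

theorem div_eq_div_of_forall_mul_sub_mul_eq_zero {α : Type*} {f g : α → ℝ} {p : ℝ × ℝ}
    (hp : p ≠ 0) (hfg : ∀ t, p.1 * g t - p.2 * f t = 0) {x y : α} (hx : f x ≠ 0)
    (hy : f y ≠ 0) : g x / f x = g y / f y := by
  have hp1 : p.1 ≠ 0 := fun h1 => by
    have h2 : p.2 = 0 := by simpa [h1, hx] using hfg x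
    exact hp (Prod.ext h1 h2)
  have hratio : ∀ t, f t ≠ 0 → g t / f t = p.2 / p.1 := fun t ht => by
    rw [div_eq_div_iff ht hp1]; linarith [hfg t]
  rw [hratio x hx, hratio y hy]

theorem exists_iteratedDeriv_mul_sub_mul_ne_zero {f g : ℝ → ℝ}
    (hfan : AnalyticOnNhd ℝ f univ) (hgan : AnalyticOnNhd ℝ g univ)
    (hvnc : ∃ x y : ℝ, f x ≠ 0 ∧ f y ≠ 0 ∧ g x / f x ≠ g y / f y) {p : ℝ × ℝ} (hp : p ≠ 0)
    (x : ℝ) : ∃ k, p.1 * iteratedDeriv k g x - p.2 * iteratedDeriv k f x ≠ 0 := by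
  obtain ⟨y₁, y₂, hy₁, hy₂, hne⟩ := hvnc
  obtain ⟨y, hy⟩ : ∃ y, p.1 * g y - p.2 * f y ≠ 0 := by
    by_contra! h
    exact hne (div_eq_div_of_forall_mul_sub_mul_eq_zero hp h hy₁ hy₂)
  have hw : AnalyticOnNhd ℝ (fun t => p.1 * g t - p.2 * f t) univ :=
    (analyticOnNhd_const.mul hgan).sub (analyticOnNhd_const.mul hfan)
  obtain ⟨k, hk⟩ := hw.exists_iteratedDeriv_ne_zero isPreconnected_univ (mem_univ x)
    (mem_univ y) hy
  exact ⟨k, by rwa [iteratedDeriv_const_mul_sub_const_mul hfan.contDiff hgan.contDiff] at hk⟩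

theorem exists_forall_le_abs_iteratedDeriv_mul_sub_mul {f g : ℝ → ℝ}
    (hfan : AnalyticOnNhd ℝ f univ) (hgan : AnalyticOnNhd ℝ g univ)
    (hvnc : ∃ x y : ℝ, f x ≠ 0 ∧ f y ≠ 0 ∧ g x / f x ≠ g y / f y) :
    ∃ n : ℕ, ∃ c > 0, ∃ δ > 0, ∀ p ∈ Metric.sphere (0 : ℝ × ℝ) 1, ∀ a ∈ Icc (0 : ℝ) 1,
      ∃ k ≤ n, ∀ y, |y - a| < δ → c ≤ |p.1 * iteratedDeriv k g y - p.2 * iteratedDeriv k f y| := by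
  set F : ℕ → (ℝ × ℝ) × ℝ → ℝ :=
    fun k q => q.1.1 * iteratedDeriv k g q.2 - q.1.2 * iteratedDeriv k f q.2
  have hF : ∀ k, Continuous (F k) := fun k => by
    have := hfan.contDiff (n := k).continuous_iteratedDeriv k le_rfl
    have := hgan.contDiff (n := k).continuous_iteratedDeriv k le_rfl
    fun_prop
  have hK : IsCompact (Metric.sphere (0 : ℝ × ℝ) 1 ×ˢ Icc (0 : ℝ) 1) :=
    (isCompact_sphere 0 1).prod isCompact_Icc
  obtain ⟨n, c, hc, δ, hδ, hlow⟩ := hK.exists_forall_le_abs_of_forall_exists_ne_zero hF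
    fun q hq => exists_iteratedDeriv_mul_sub_mul_ne_zero hfan hgan hvnc
        (Metric.ne_of_mem_sphere hq.1 one_ne_zero) q.2
  refine ⟨n, c, hc, δ, hδ, fun p hp a ha => ?_⟩
  obtain ⟨k, hkn, hk⟩ := hlow (p, a) ⟨hp, ha⟩
  refine ⟨k, hkn, fun y hy => hk (p, y) ?_⟩
  rwa [Metric.mem_ball, Prod.dist_eq, dist_self, max_eq_right dist_nonneg, Real.dist_eq]

theorem exists_one_le_smul_mem_sphere (E : ℝ) :
    ∃ s ≥ (1 : ℝ), ∃ p ∈ Metric.sphere (0 : ℝ × ℝ) 1, ((1 : ℝ), E) = s • p := by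
  set s := max 1 |E|
  have hs : 0 < s := zero_lt_one.trans_le (le_max_left _ _)
  refine ⟨s, le_max_left _ _, s⁻¹ • (1, E), ?_, by rw [smul_inv_smul₀ hs.ne']⟩
  rw [mem_sphere_zero_iff_norm, norm_smul, Prod.norm_def, norm_inv, Real.norm_of_nonneg hs.le]
  simp [s, hs.ne']

theorem volume_sep_Ico_le_of_forall_Icc {N : ℕ} (hN : 0 < N) (P : ℝ → Prop) {B : ENNReal}
    (hB : ∀ j < N, volume {x ∈ Icc ((j : ℝ) / N) ((j + 1) / N) | P x} ≤ B) :
    volume {x ∈ Ico (0 : ℝ) 1 | P x} ≤ N * B := by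
  have hNpos : (0 : ℝ) < N := by exact_mod_cast hN
  have hcover : {x ∈ Ico (0 : ℝ) 1 | P x} ⊆
      ⋃ j ∈ Finset.range N, {x ∈ Icc ((j : ℝ) / N) ((j + 1) / N) | P x} := by
    rintro x ⟨⟨hx0, hx1⟩, hx⟩
    have hxN : 0 ≤ x * N := by positivity
    refine mem_biUnion (x := ⌊x * N⌋₊) (Finset.mem_range.mpr ?_) ⟨⟨?_, ?_⟩, hx⟩
    · rw [Nat.floor_lt hxN]; nlinarith
    · rw [div_le_iff₀ hNpos]; exact Nat.floor_le hxN
    · rw [le_div_iff₀ hNpos]; exact (Nat.lt_floor_add_one _).le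
  calc volume {x ∈ Ico (0 : ℝ) 1 | P x}
      ≤ ∑ j ∈ Finset.range N, volume {x ∈ Icc ((j : ℝ) / N) ((j + 1) / N) | P x} :=
        (measure_mono hcover).trans (measure_biUnion_finset_le _ _)
    _ ≤ ∑ _j ∈ Finset.range N, B := Finset.sum_le_sum fun j hj => hB j (Finset.mem_range.mp hj)
    _ = N * B := by rw [Finset.sum_const, Finset.card_range, nsmul_eq_mul]

theorem exists_volume_sublevel_le_mul_rpow {f g : ℝ → ℝ}
    (hfan : AnalyticOnNhd ℝ f univ) (hgan : AnalyticOnNhd ℝ g univ)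
    (hvnc : ∃ x y : ℝ, f x ≠ 0 ∧ f y ≠ 0 ∧ g x / f x ≠ g y / f y) :
    ∃ C η : ℝ, 0 < η ∧ ∃ ε₀ > 0, ∀ E ε : ℝ, 0 < ε → ε < ε₀ →
      volume {x ∈ Ico (0 : ℝ) 1 | |g x - E * f x| < ε} ≤ ENNReal.ofReal (C * ε ^ η) := by
  obtain ⟨n, c, hc, δ, hδ, hlow⟩ := exists_forall_le_abs_iteratedDeriv_mul_sub_mul hfan hgan hvnc
  obtain ⟨N, hN⟩ := exists_nat_one_div_lt hδ
  set η : ℝ := 1 / (n + 1)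
  refine ⟨(N + 1) * 4 ^ (n + 2) / c ^ η, η, by positivity, c, hc, fun E ε hε hεc => ?_⟩
  obtain ⟨s, hs, p, hp, hEp⟩ := exists_one_le_smul_mem_sphere E
  have hfun : (fun x => g x - E * f x) = fun x => s * (p.1 * g x - p.2 * f x) := by
    obtain ⟨h1, h2⟩ := Prod.ext_iff.mp hEp
    simp only [Prod.smul_fst, Prod.smul_snd, smul_eq_mul] at h1 h2
    funext x
    linear_combination (g x) * h1 - f x * h2
  refine (volume_sep_Ico_le_of_forall_Icc N.succ_pos _
    (B := ENNReal.ofReal (4 ^ (n + 2) * (ε / c) ^ η)) fun j hj => ?_).trans (le_of_eq ?_)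
  · have hN1 : (0 : ℝ) < N + 1 := by positivity
    have hj1 : (j : ℝ) + 1 ≤ N + 1 := by exact_mod_cast hj
    obtain ⟨k, hkn, hk⟩ := hlow p hp (j / (N + 1 : ℕ)) ⟨by positivity, by
      push_cast; rw [div_le_one hN1]; linarith⟩
    refine volume_sublevel_le_of_le_abs_iteratedDeriv_of_le hkn
      (hgan.contDiff.sub (contDiff_const.mul hfan.contDiff)) ordConnected_Icc hc hε hεc.le
      fun y hy => ?_
    push_cast at hy hk
    have hy' : |y - j / (N + 1)| < δ := by
      rw [abs_of_nonneg (by linarith [hy.1])]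
      calc y - j / (N + 1) ≤ (j + 1) / (N + 1) - j / (N + 1) := by linarith [hy.2]
        _ = 1 / (N + 1) := by ring
        _ < δ := hN
    rw [hfun, iteratedDeriv_const_mul_field,
      iteratedDeriv_const_mul_sub_const_mul hfan.contDiff hgan.contDiff, abs_mul,
      abs_of_pos (zero_lt_one.trans_le hs)]
    exact (hk y hy').trans (le_mul_of_one_le_left (abs_nonneg _) hs)
  · rw [← ENNReal.ofReal_natCast, ← ENNReal.ofReal_mul (by positivity),
      Real.div_rpow hε.le hc.le]
    congr 1
    push_cast
    ring

theorem exists_pos_forall_mul_rpow_lt_rpow_half (C : ℝ) {η : ℝ} (hη : 0 < η) :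
    ∃ ε₁ > 0, ∀ ε : ℝ, 0 < ε → ε < ε₁ → C * ε ^ η < ε ^ (η / 2) := by
  have hlim : Filter.Tendsto (fun ε : ℝ => C * ε ^ (η / 2)) (nhdsWithin 0 (Ioi 0)) (nhds 0) := by
    have hη2 : 0 < η / 2 := by positivity
    simpa [Real.zero_rpow hη2.ne'] using
      ((Real.continuousAt_rpow_const 0 (η / 2) (Or.inr hη2.le)).tendsto.mono_left
        nhdsWithin_le_nhds).const_mul C
  obtain ⟨ε₁, hε₁, hsmall⟩ := (nhdsGT_basis (0 : ℝ)).eventually_iff.mp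
    (hlim.eventually (gt_mem_nhds one_pos))
  refine ⟨ε₁, hε₁, fun ε hε hεε₁ => ?_⟩
  calc C * ε ^ η = C * ε ^ (η / 2) * ε ^ (η / 2) := by
        rw [mul_assoc, ← Real.rpow_add hε, add_halves]
    _ < 1 * ε ^ (η / 2) := by gcongr; exact hsmall ⟨hε, hεε₁⟩
    _ = ε ^ (η / 2) := one_mul _

theorem statement4_general (f g : ℝ → ℝ)
    (hfan : AnalyticOnNhd ℝ f Set.univ) (hgan : AnalyticOnNhd ℝ g Set.univ)
    (hvnc : ∃ x y : ℝ, f x ≠ 0 ∧ f y ≠ 0 ∧ g x / f x ≠ g y / f y) :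
    ∃ c > (0 : ℝ), ∃ ε₁ > (0 : ℝ), ∀ E : ℝ, ∀ ε : ℝ, 0 < ε → ε < ε₁ →
      volume {x ∈ Ico (0 : ℝ) 1 | |g x - E * f x| < ε} < ENNReal.ofReal (ε ^ c) := by
  obtain ⟨C, η, hη, ε₀, hε₀, hvol⟩ := exists_volume_sublevel_le_mul_rpow hfan hgan hvnc
  obtain ⟨ε₁, hε₁, hlt⟩ := exists_pos_forall_mul_rpow_lt_rpow_half C hη
  refine ⟨η / 2, by positivity, min ε₀ ε₁, lt_min hε₀ hε₁, fun E ε hε hεlt => ?_⟩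
  exact (hvol E ε hε (hεlt.trans_le (min_le_left _ _))).trans_lt <|
    (ENNReal.ofReal_lt_ofReal_iff (by positivity)).mpr
      (hlt ε hε (hεlt.trans_le (min_le_right _ _)))

/-- **Łojasiewicz inequality for `g - E·f`.**
Let `f, g` be real analytic on `𝕋 = ℝ/ℤ` (encoded as `1`-periodic real analytic functions on
`ℝ`) with `f` and `v = g/f` nonconstant and `Z(f) = {x : f x = 0} ≠ ∅`.  There is
`c = c(f,g) > 0` such that `mes {x ∈ 𝕋 : |g x - E·f x| < ε} < ε ^ c` for all `E ∈ ℝ` and all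
sufficiently small `ε > 0`. -/
theorem statement4 (f g : ℝ → ℝ)
    (hfper : Function.Periodic f 1) (hgper : Function.Periodic g 1)
    (hfan : AnalyticOnNhd ℝ f Set.univ) (hgan : AnalyticOnNhd ℝ g Set.univ)
    (hfnc : ∃ x y : ℝ, f x ≠ f y)
    (hvnc : ∃ x y : ℝ, f x ≠ 0 ∧ f y ≠ 0 ∧ g x / f x ≠ g y / f y)
    (hZ : ∃ x : ℝ, f x = 0) :
    ∃ c > (0 : ℝ), ∃ ε₁ > (0 : ℝ), ∀ E : ℝ, ∀ ε : ℝ, 0 < ε → ε < ε₁ →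
      volume {x ∈ Ico (0 : ℝ) 1 | |g x - E * f x| < ε} < ENNReal.ofReal (ε ^ c) :=
  statement4_general f g hfan hgan hvnc
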